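/- arXiv:1807.11183 — 2 statements merged into one kernel-verified Lean document; each statement's English description precedes it below -/
import Mathlib

section
/- Let n ≥ 4 and let I = (a_1, ..., a_n) be an ordered irreducible signature of Q_n. Suppose that for some i ∈ {2, ..., n−1} we have a_{i+1} − a_i ≤ 1. Then ε_i(I) ≥ 2. -/
open SimpleGraph

/-- The `n`-cube: vertices are the subsets of `[n]` (modelled as `Finset (Fin n)`),
with an edge between `X` and `Y` iff their symmetric difference is a singleton. -/
def cube (n : ℕ) : SimpleGraph (Finset (Fin n)) where
  Adj X Y := (symmDiff X Y).card = 1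
  symm := by
    constructor
    intro X Y h
    rwa [symmDiff_comm]
  loopless := by
    constructor
    intro X h
    simp [symmDiff_self, Finset.bot_eq_empty] at h

/-- `T` is a spanning tree of `G` (both graphs on the same vertex set). -/
def IsSpanningTreeOf {V : Type*} (T G : SimpleGraph V) : Prop :=
  T ≤ G ∧ T.IsTree

/-- The edge `e` of the `n`-cube is in direction `i`. -/
def edgeInDir {n : ℕ} (i : Fin n) (e : Sym2 (Finset (Fin n))) : Prop :=
  ∃ X : Finset (Fin n), e = s(X, symmDiff X {i})

/-- The number of edges of `T` in direction `i`. -/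
noncomputable def dirCount {n : ℕ} (T : SimpleGraph (Finset (Fin n))) (i : Fin n) : ℕ :=
  {e | e ∈ T.edgeSet ∧ edgeInDir i e}.ncard

/-- `a` is the signature of the tree `T`. -/
def HasSig {n : ℕ} (T : SimpleGraph (Finset (Fin n))) (a : Fin n → ℕ) : Prop :=
  ∀ i, dirCount T i = a i

/-- `a` is a signature of `Q_n`, i.e. the signature of some spanning tree of the `n`-cube. -/
def IsSignature (n : ℕ) (a : Fin n → ℕ) : Prop :=
  ∃ T, IsSpanningTreeOf T (cube n) ∧ HasSig T a

/-- A section of the set of nonempty subsets of `[n]`. -/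
def IsSection {n : ℕ} (ψ : Finset (Fin n) → Fin n) : Prop :=
  ∀ X : Finset (Fin n), X.Nonempty → ψ X ∈ X

/-- The number of nonempty subsets on which the section `ψ` takes the value `i`. -/
noncomputable def secCount {n : ℕ} (ψ : Finset (Fin n) → Fin n) (i : Fin n) : ℕ :=
  {X : Finset (Fin n) | X.Nonempty ∧ ψ X = i}.ncard

/-- The tuple `a` reduces over `R` : `Σ_{i ∈ R} a i = 2^|R| - 1`. -/
def ReducesOver {n : ℕ} (a : Fin n → ℕ) (R : Finset (Fin n)) : Prop :=
  ∑ i ∈ R, a i = 2 ^ R.card - 1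

/-- `a` is reducible: it reduces over some proper nonempty subset of `[n]`. -/
def IsReducibleSig {n : ℕ} (a : Fin n → ℕ) : Prop :=
  ∃ R : Finset (Fin n), R.Nonempty ∧ R ≠ Finset.univ ∧ ReducesOver a R

/-- `a` is irreducible. -/
def IsIrreducibleSig {n : ℕ} (a : Fin n → ℕ) : Prop := ¬ IsReducibleSig a

/-- `T` is upright: every vertex `X` is at distance `|X|` in `T` from the root `∅`. -/
def IsUpright {n : ℕ} (T : SimpleGraph (Finset (Fin n))) : Prop :=
  ∀ X : Finset (Fin n), T.dist X ∅ = X.card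

/-- `ψ` is the section associated to the upright tree `T`: for each nonempty `X`,
`ψ X ∈ X` and `X - {ψ X}` is the next vertex after `X` on the path in `T` from `X` to `∅`. -/
def IsTreeSection {n : ℕ} (T : SimpleGraph (Finset (Fin n))) (ψ : Finset (Fin n) → Fin n) : Prop :=
  ∀ X : Finset (Fin n), X.Nonempty → ψ X ∈ X ∧ T.Adj X (X.erase (ψ X))

/-- The minimum of `Σ_{i ∈ K} a i` over the sets `K` of `k` directions. -/
noncomputable def minSum {n : ℕ} (a : Fin n → ℕ) (k : ℕ) : ℕ :=
  sInf {m : ℕ | ∃ K : Finset (Fin n), K.card = k ∧ ∑ i ∈ K, a i = m}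

/-- The excess of `a` at `k`. -/
noncomputable def excess {n : ℕ} (a : Fin n → ℕ) (k : ℕ) : ℤ :=
  (minSum a k : ℤ) - (2 ^ k - 1)

/-- The result of sliding the edge `e` in direction `i`. -/
def slideEdge {n : ℕ} (i : Fin n) (e : Sym2 (Finset (Fin n))) : Sym2 (Finset (Fin n)) :=
  Sym2.map (fun X => symmDiff X {i}) e

/-- The edge `e` of the spanning tree `T` of `Q_n` is `i`-slidable. -/
def Slidable (n : ℕ) (T : SimpleGraph (Finset (Fin n))) (i : Fin n)
    (e : Sym2 (Finset (Fin n))) : Prop :=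
  e ∈ T.edgeSet ∧
    IsSpanningTreeOf (SimpleGraph.fromEdgeSet ((T.edgeSet \ {e}) ∪ {slideEdge i e})) (cube n)

/-- The edge set `E` is (the edge set of) a spanning tree of the subgraph of the
`n`-cube induced on the vertex set `s`. -/
def IsSpanningTreeOn (n : ℕ) (s : Set (Finset (Fin n))) (E : Set (Sym2 (Finset (Fin n)))) : Prop :=
  E ⊆ (cube n).edgeSet ∧ (∀ e ∈ E, ∀ v ∈ e, v ∈ s) ∧
    ((SimpleGraph.fromEdgeSet E).induce s).IsTree

/-- The edges of `T` with both endpoints in `s`. -/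
def edgesWithin {n : ℕ} (s : Set (Finset (Fin n))) (T : SimpleGraph (Finset (Fin n))) :
    Set (Sym2 (Finset (Fin n))) :=
  {e | e ∈ T.edgeSet ∧ ∀ v ∈ e, v ∈ s}

/-- The edge `e` of the tree with edge set `E`, spanning the subgraph of the `n`-cube
induced on `s`, is `i`-slidable. -/
def SlidableOn (n : ℕ) (s : Set (Finset (Fin n))) (E : Set (Sym2 (Finset (Fin n))))
    (i : Fin n) (e : Sym2 (Finset (Fin n))) : Prop :=
  e ∈ E ∧ IsSpanningTreeOn n s ((E \ {e}) ∪ {slideEdge i e})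

/-- The number of edges of `T` in direction `i` with both endpoints in `s`. -/
noncomputable def dirCountOn {n : ℕ} (s : Set (Finset (Fin n)))
    (T : SimpleGraph (Finset (Fin n))) (i : Fin n) : ℕ :=
  {e | e ∈ T.edgeSet ∧ edgeInDir i e ∧ ∀ v ∈ e, v ∈ s}.ncard

/-- `T'` is a spanning tree of the `n`-cube obtained from the spanning tree `T` by a
single edge slide. -/
def SlideStep (n : ℕ) (T T' : SimpleGraph (Finset (Fin n))) : Prop :=
  IsSpanningTreeOf T (cube n) ∧ IsSpanningTreeOf T' (cube n) ∧
    ∃ (i : Fin n) (e : Sym2 (Finset (Fin n))), e ∈ T.edgeSet ∧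
      T' = SimpleGraph.fromEdgeSet ((T.edgeSet \ {e}) ∪ {slideEdge i e})

/-- The trees `T` and `T'` are related by a single edge slide. -/
def SlideAdj (n : ℕ) (T T' : SimpleGraph (Finset (Fin n))) : Prop :=
  T ≠ T' ∧ ∃ (i : Fin n) (e : Sym2 (Finset (Fin n))),
    (e ∈ T.edgeSet ∧ T' = SimpleGraph.fromEdgeSet ((T.edgeSet \ {e}) ∪ {slideEdge i e})) ∨
    (e ∈ T'.edgeSet ∧ T = SimpleGraph.fromEdgeSet ((T'.edgeSet \ {e}) ∪ {slideEdge i e}))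

/-- The spanning trees of the `n`-cube. -/
def SpanningTrees (n : ℕ) := {T : SimpleGraph (Finset (Fin n)) // IsSpanningTreeOf T (cube n)}

/-- The edge slide graph `E(n)` of the `n`-cube. -/
def eslide (n : ℕ) : SimpleGraph (SpanningTrees n) where
  Adj T T' := SlideAdj n T.1 T'.1
  symm := by
    constructor
    rintro T T' ⟨hne, i, e, h⟩
    exact ⟨hne.symm, i, e, h.symm⟩
  loopless := by
    constructor
    rintro T ⟨hne, -⟩
    exact hne rfl

/-- The projection `π_R(T)` of `T` to `Q_R`: a graph on the subsets of `R`, with `A`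
adjacent to `B` iff some edge of `T` projects to `{A, B}`. -/
def projTree (n : ℕ) (R : Finset (Fin n)) (T : SimpleGraph (Finset (Fin n))) :
    SimpleGraph ↥{W : Finset (Fin n) | W ⊆ R} where
  Adj A B := A.1 ≠ B.1 ∧ ∃ U V : Finset (Fin n), T.Adj U V ∧ U ∩ R = A.1 ∧ V ∩ R = B.1
  symm := by
    constructor
    rintro A B ⟨hne, U, V, hUV, hU, hV⟩
    exact ⟨hne.symm, V, U, hUV.symm, hV, hU⟩
  loopless := by
    constructor
    rintro A ⟨hne, -⟩
    exact hne rfl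

/-- The projected edge set `π_R(T)`: images under `π_R` of the edges of `T` in
directions belonging to `R`. -/
def projEdges {n : ℕ} (R : Finset (Fin n)) (T : SimpleGraph (Finset (Fin n))) :
    Set (Sym2 (Finset (Fin n))) :=
  {f | ∃ e ∈ T.edgeSet, (∃ i ∈ R, edgeInDir i e) ∧ f = Sym2.map (· ∩ R) e}

/-- The decomposition `T ↦ (F_T, (T(R,X))_{X ⊆ R})` of a tree reducing over `R`. -/
def decompose (n : ℕ) (R : Finset (Fin n)) (T : SimpleGraph (Finset (Fin n))) :
    Set (Sym2 (Finset (Fin n))) ×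
      ((X : Finset (Fin n)) → X ⊆ R → SimpleGraph ↥{W : Finset (Fin n) | W ∩ R = X}) :=
  ⟨{e | e ∈ T.edgeSet ∧ ∃ i ∈ R, edgeInDir i e},
   fun X _ => T.induce {W : Finset (Fin n) | W ∩ R = X}⟩

/-- `s` is the least index such that `ε_k(a) = 0` for all `s ≤ k ≤ n`; i.e. the
entries of (an ordered) `a` with index `≤ s` form the unsaturated part of `a`. -/
def UnsatIndex (n : ℕ) (a : Fin n → ℕ) (s : ℕ) : Prop :=
  (∀ k, s ≤ k → k ≤ n → excess a k = 0) ∧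
    ∀ s' < s, ¬ (∀ k, s' ≤ k → k ≤ n → excess a k = 0)

/-- The restriction of `a` to its first `s` entries is reducible (as a tuple of length `s`). -/
def ReducibleBelow {n : ℕ} (a : Fin n → ℕ) (s : ℕ) : Prop :=
  ∃ R : Finset (Fin n), R.Nonempty ∧ (∀ i ∈ R, (i : ℕ) < s) ∧ R.card < s ∧
    ∑ i ∈ R, a i = 2 ^ R.card - 1

/-- `a` is strictly reducible: it is reducible and its unsaturated part is reducible. -/
def StrictlyReducible (n : ℕ) (a : Fin n → ℕ) : Prop :=
  IsReducibleSig a ∧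
    ∃ (σ : Equiv.Perm (Fin n)) (s : ℕ), Monotone (a ∘ σ) ∧
      UnsatIndex n (a ∘ σ) s ∧ ReducibleBelow (a ∘ σ) s

/-!
Projecting a spanning tree of `Q_n` to the subcube `Q_K` gives a connected graph on `2^|K|`
vertices whose edges are images of the tree edges in directions of `K`; hence
`Σ_{i ∈ K} a_i ≥ 2^|K| - 1`, with equality for `K = [n]`, and irreducibility makes the inequality
strict for proper nonempty `K`. For ordered `a` the minimum defining `ε_i` is the prefix sum `s_i`.
If `s_i = 2^i`, then `a_i = s_i - s_{i-1} ≤ 2^(i-1)`, so `s_{i+1} ≤ 2^i + 2^(i-1) + 1`, which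
contradicts `s_{i+1} ≥ 2^(i+1)` when `i + 1 < n`, and `s_n = 2^n - 1` when `i + 1 = n ≥ 4`.
-/

open Finset

namespace SimpleGraph

variable {V W : Type*} {G : SimpleGraph V} {H : SimpleGraph W} {f : V → W}

lemma Reachable.map_of_adj_imp (hf : ∀ u v, G.Adj u v → f u = f v ∨ H.Adj (f u) (f v))
    {u v : V} (h : G.Reachable u v) : H.Reachable (f u) (f v) := by
  rw [reachable_iff_reflTransGen] at h ⊢
  refine h.lift' f fun u v huv => ?_
  rcases hf u v huv with heq | hadj
  · simp only [Function.onFun, heq]; exact .refl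
  · exact .single hadj

lemma Connected.of_surjective_of_adj_imp (hG : G.Connected) (hsurj : f.Surjective)
    (hf : ∀ u v, G.Adj u v → f u = f v ∨ H.Adj (f u) (f v)) : H.Connected := by
  refine (connected_iff _).mpr ⟨fun x y => ?_, hG.nonempty.map f⟩
  obtain ⟨u, rfl⟩ := hsurj x
  obtain ⟨v, rfl⟩ := hsurj y
  exact (hG u v).map_of_adj_imp hf

end SimpleGraph

variable {n : ℕ}

lemma edgeInDir.lift_symmDiff {i : Fin n} {e : Sym2 (Finset (Fin n))} (h : edgeInDir i e) :
    Sym2.lift ⟨symmDiff, fun X Y => symmDiff_comm X Y⟩ e = {i} := by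
  obtain ⟨X, rfl⟩ := h
  exact symmDiff_symmDiff_cancel_left X {i}

lemma edgeInDir.unique {i j : Fin n} {e : Sym2 (Finset (Fin n))} (hi : edgeInDir i e)
    (hj : edgeInDir j e) : i = j :=
  singleton_injective (hi.lift_symmDiff.symm.trans hj.lift_symmDiff)

lemma exists_eq_symmDiff_singleton_of_cube_adj {X Y : Finset (Fin n)} (h : (cube n).Adj X Y) :
    ∃ i, Y = symmDiff X {i} := by
  obtain ⟨i, hi⟩ := card_eq_one.mp h
  exact ⟨i, by rw [← hi, symmDiff_symmDiff_cancel_left]⟩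

lemma symmDiff_singleton_inter_of_notMem {i : Fin n} {K : Finset (Fin n)} (hi : i ∉ K)
    (X : Finset (Fin n)) : symmDiff X {i} ∩ K = X ∩ K := by
  rw [← inf_eq_inter, inf_symmDiff_distrib_right, inf_eq_inter, inf_eq_inter,
    singleton_inter_of_notMem hi, ← bot_eq_empty, symmDiff_bot]

def dirEdges (T : SimpleGraph (Finset (Fin n))) (i : Fin n) : Set (Sym2 (Finset (Fin n))) :=
  {e | e ∈ T.edgeSet ∧ edgeInDir i e}

lemma ncard_dirEdges (T : SimpleGraph (Finset (Fin n))) (i : Fin n) :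
    (dirEdges T i).ncard = dirCount T i := rfl

section Projection

variable {T : SimpleGraph (Finset (Fin n))} (K : Finset (Fin n))

def projVert (U : Finset (Fin n)) : ↥{W : Finset (Fin n) | W ⊆ K} :=
  ⟨U ∩ K, inter_subset_right⟩

lemma projVert_surjective : Function.Surjective (projVert K) :=
  fun A => ⟨A.1, Subtype.ext (inter_eq_left.mpr A.2)⟩

lemma projTree_connected (hT : T.Connected) : (projTree n K T).Connected :=
  hT.of_surjective_of_adj_imp (projVert_surjective K) fun U V hUV => by
    by_cases heq : projVert K U = projVert K V
    · exact .inl heq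
    · exact .inr ⟨fun h => heq (Subtype.ext h), U, V, hUV, rfl, rfl⟩

lemma natCard_setOf_subset : Nat.card ↥{W : Finset (Fin n) | W ⊆ K} = 2 ^ #K := by
  rw [Nat.card_coe_set_eq, show {W : Finset (Fin n) | W ⊆ K} = ↑K.powerset by ext; simp,
    Set.ncard_coe_finset, card_powerset]

lemma projTree_edgeSet_subset (hle : T ≤ cube n) :
    (projTree n K T).edgeSet ⊆ Sym2.map (projVert K) '' ⋃ i ∈ K, dirEdges T i := by
  intro e he
  induction e with | h A B =>
  obtain ⟨hne, U, V, hUV, hU, hV⟩ := he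
  obtain ⟨i, rfl⟩ := exists_eq_symmDiff_singleton_of_cube_adj (hle hUV)
  have hiK : i ∈ K := by
    by_contra hiK
    exact hne (hU ▸ hV ▸ (symmDiff_singleton_inter_of_notMem hiK U).symm)
  refine ⟨s(U, symmDiff U {i}), Set.mem_biUnion hiK ⟨hUV, U, rfl⟩, ?_⟩
  rw [Sym2.map_mk, show projVert K U = A from Subtype.ext hU,
    show projVert K _ = B from Subtype.ext hV]

lemma two_pow_card_sub_one_le_sum_dirCount (hle : T ≤ cube n) (hT : T.Connected) :
    2 ^ #K - 1 ≤ ∑ i ∈ K, dirCount T i := by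
  have hvert := (projTree_connected K hT).card_vert_le_card_edgeSet_add_one
  rw [natCard_setOf_subset, Nat.card_coe_set_eq] at hvert
  have hedge : (projTree n K T).edgeSet.ncard ≤ (⋃ i ∈ K, dirEdges T i).ncard :=
    (Set.ncard_le_ncard (projTree_edgeSet_subset K hle)).trans Set.ncard_image_le
  have hunion := K.set_ncard_biUnion_le (dirEdges T)
  simp only [ncard_dirEdges] at hunion
  omega

end Projection

lemma sum_dirCount_univ {T : SimpleGraph (Finset (Fin n))} (hT : IsSpanningTreeOf T (cube n)) :
    ∑ i, dirCount T i = 2 ^ n - 1 := by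
  have hunion : ⋃ i, dirEdges T i = T.edgeSet := by
    refine Set.iUnion_subset (fun i => Set.sep_subset _ _) |>.antisymm fun e he => ?_
    induction e with | h X Y =>
    obtain ⟨i, rfl⟩ := exists_eq_symmDiff_singleton_of_cube_adj (hT.1 (T.mem_edgeSet.mp he))
    exact Set.mem_iUnion.mpr ⟨i, he, X, rfl⟩
  have hdisj : Pairwise fun i j => Disjoint (dirEdges T i) (dirEdges T j) := fun i j hij =>
    Set.disjoint_left.mpr fun _ hi hj => hij (hi.2.unique hj.2)
  have hcard := (isTree_iff_connected_and_card.mp hT.2).2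
  rw [Nat.card_eq_fintype_card (α := Finset (Fin n)), Fintype.card_finset, Fintype.card_fin,
    Nat.card_coe_set_eq, ← hunion, Set.ncard_iUnion_of_finite (fun _ => Set.toFinite _) hdisj,
    finsum_eq_sum_of_fintype] at hcard
  simp only [ncard_dirEdges] at hcard
  omega

namespace IsSignature

variable {a : Fin n → ℕ}

lemma two_pow_card_sub_one_le_sum (ha : IsSignature n a) (K : Finset (Fin n)) :
    2 ^ #K - 1 ≤ ∑ i ∈ K, a i := by
  obtain ⟨T, hT, hs⟩ := ha
  obtain rfl : dirCount T = a := funext hs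
  exact two_pow_card_sub_one_le_sum_dirCount K hT.1 hT.2.connected

lemma sum_univ (ha : IsSignature n a) : ∑ i, a i = 2 ^ n - 1 := by
  obtain ⟨T, hT, hs⟩ := ha
  obtain rfl : dirCount T = a := funext hs
  exact sum_dirCount_univ hT

lemma two_pow_card_le_sum (ha : IsSignature n a) (hirr : IsIrreducibleSig a) {K : Finset (Fin n)}
    (hK : K.Nonempty) (hKu : K ≠ univ) : 2 ^ #K ≤ ∑ i ∈ K, a i := by
  have hle := ha.two_pow_card_sub_one_le_sum K
  have hne : ∑ i ∈ K, a i ≠ 2 ^ #K - 1 := fun h => hirr ⟨K, hK, hKu, h⟩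
  have := Nat.one_le_two_pow (n := #K)
  omega

end IsSignature

lemma Finset.sum_le_sum_of_isLowerSet {ι : Type*} [LinearOrder ι] {a : ι → ℕ} (ha : Monotone a)
    {F K : Finset ι} (hF : IsLowerSet (F : Set ι)) (hcard : #F = #K) :
    ∑ i ∈ F, a i ≤ ∑ i ∈ K, a i := by
  classical
  set c := (F \ K).sup a
  have hc : ∀ y ∈ K \ F, c ≤ a y := fun y hy => Finset.sup_le fun x hx =>
    ha (le_of_not_ge fun hyx => (mem_sdiff.mp hy).2 (hF hyx (mem_sdiff.mp hx).1))
  calc ∑ i ∈ F, a i = ∑ i ∈ F ∩ K, a i + ∑ i ∈ F \ K, a i := (sum_inter_add_sum_sdiff ..).symm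
    _ ≤ ∑ i ∈ F ∩ K, a i + #(F \ K) • c := by
      gcongr; exact sum_le_card_nsmul _ _ _ fun x hx => le_sup hx
    _ = ∑ i ∈ K ∩ F, a i + #(K \ F) • c := by rw [inter_comm, card_sdiff_comm hcard]
    _ ≤ ∑ i ∈ K ∩ F, a i + ∑ i ∈ K \ F, a i := by gcongr; exact card_nsmul_le_sum _ _ _ hc
    _ = ∑ i ∈ K, a i := sum_inter_add_sum_sdiff ..

def firstDirs (n k : ℕ) : Finset (Fin n) := {j | (j : ℕ) < k}

variable {k : ℕ}

lemma isLowerSet_firstDirs : IsLowerSet (firstDirs n k : Set (Fin n)) := fun _ _ hle h => by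
  simp only [firstDirs, coe_filter, mem_univ, true_and, Set.mem_ofPred_eq] at h ⊢
  exact lt_of_le_of_lt hle h

lemma card_firstDirs (hk : k ≤ n) : #(firstDirs n k) = k := by
  rw [firstDirs, Fin.card_filter_val_lt, min_eq_right hk]

lemma firstDirs_self : firstDirs n n = univ := by
  ext j; simp [firstDirs]

lemma sum_firstDirs_succ (a : Fin n → ℕ) (hk : k < n) :
    ∑ j ∈ firstDirs n (k + 1), a j = ∑ j ∈ firstDirs n k, a j + a ⟨k, hk⟩ := by
  have : firstDirs n (k + 1) = insert ⟨k, hk⟩ (firstDirs n k) := by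
    ext j; simp [firstDirs, Fin.ext_iff]; omega
  rw [this, sum_insert (by simp [firstDirs]), add_comm]

lemma minSum_eq_sum_firstDirs {a : Fin n → ℕ} (ha : Monotone a) (hk : k ≤ n) :
    minSum a k = ∑ j ∈ firstDirs n k, a j :=
  le_antisymm (Nat.sInf_le ⟨_, card_firstDirs hk, rfl⟩) <|
    le_csInf ⟨_, _, card_firstDirs hk, rfl⟩ fun _ ⟨_, hK, hm⟩ =>
      hm ▸ sum_le_sum_of_isLowerSet ha isLowerSet_firstDirs ((card_firstDirs hk).trans hK.symm)

lemma IsSignature.two_pow_le_sum_firstDirs {a : Fin n → ℕ} (ha : IsSignature n a)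
    (hirr : IsIrreducibleSig a) (hk0 : 0 < k) (hkn : k < n) :
    2 ^ k ≤ ∑ j ∈ firstDirs n k, a j := by
  have hcard : #(firstDirs n k) = k := card_firstDirs hkn.le
  have hne : firstDirs n k ≠ univ := fun h => by
    rw [h, card_univ, Fintype.card_fin] at hcard
    omega
  simpa [hcard] using ha.two_pow_card_le_sum hirr (card_pos.mp (by omega)) hne

lemma IsSignature.two_pow_succ_add_one_le_sum_firstDirs {a : Fin n → ℕ} (ha : IsSignature n a)
    (hirr : IsIrreducibleSig a) {m : ℕ} (hm : 1 ≤ m) (hmn : m + 2 ≤ n) (hn : 4 ≤ n)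
    (hstep : a ⟨m + 1, by omega⟩ ≤ a ⟨m, by omega⟩ + 1) :
    2 ^ (m + 1) + 1 ≤ ∑ j ∈ firstDirs n (m + 1), a j := by
  set s : ℕ → ℕ := fun k => ∑ j ∈ firstDirs n k, a j
  change 2 ^ (m + 1) + 1 ≤ s (m + 1)
  have hsucc : s (m + 1) = s m + a ⟨m, by omega⟩ := sum_firstDirs_succ a (by omega)
  have hsucc' : s (m + 2) = s (m + 1) + a ⟨m + 1, by omega⟩ := sum_firstDirs_succ a (by omega)
  have hm0 : 2 ^ m ≤ s m := ha.two_pow_le_sum_firstDirs hirr (by omega) (by omega)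
  have hm1 : 2 ^ (m + 1) ≤ s (m + 1) := ha.two_pow_le_sum_firstDirs hirr (by omega) (by omega)
  have h2m : 2 ^ 1 ≤ 2 ^ m := Nat.pow_le_pow_right two_pos hm
  rw [pow_succ] at hm1 ⊢
  rcases hmn.lt_or_eq with hlt | heq
  · have hm2 : 2 ^ (m + 2) ≤ s (m + 2) := ha.two_pow_le_sum_firstDirs hirr (by omega) hlt
    rw [pow_add] at hm2
    omega
  · have htop : s (m + 2) = 2 ^ (m + 2) - 1 := by
      simp only [s, heq, firstDirs_self, ha.sum_univ]
    have h4m : 2 ^ 2 ≤ 2 ^ m := Nat.pow_le_pow_right two_pos (by omega)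
    rw [pow_add] at htop
    omega

/-- The paper's 1-based `a_i`, `a_{i+1}` are `a ⟨i - 1, _⟩`, `a ⟨i, _⟩` here. -/
theorem stmt7 (n : ℕ) (hn : 4 ≤ n) (a : Fin n → ℕ)
    (hsig : IsSignature n a) (hmono : Monotone a) (hirr : IsIrreducibleSig a)
    (i : ℕ) (hi1 : 2 ≤ i) (hi2 : i ≤ n - 1)
    (hstep : a ⟨i, by omega⟩ ≤ a ⟨i - 1, by omega⟩ + 1) :
    2 ≤ excess a i := by
  obtain ⟨m, rfl⟩ : ∃ m, i = m + 1 := ⟨i - 1, by omega⟩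
  have hsum := hsig.two_pow_succ_add_one_le_sum_firstDirs hirr (by omega) (by omega) hn hstep
  rw [excess, minSum_eq_sum_firstDirs hmono (by omega)]
  have : (2 : ℤ) ^ (m + 1) + 1 ≤ ∑ j ∈ firstDirs n (m + 1), a j := by exact_mod_cast hsum
  linarith
end

section
/- Let T be a spanning tree of Q_n and let R be a proper nonempty subset of [n]. Then T reduces over R if and only if T(R,X) is a spanning tree of Q_n(R,X) for every X ⊆ R. -/
open SimpleGraph

/-!
The fibres of `W ↦ W ∩ R` are the `2^|R|` subcubes `Q_n(R,X)`, which partition the `2^n`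
vertices. Each `T(R,X)` is a forest, so it has at most `|Q_n(R,X)| - 1` edges, with equality iff it
is a tree. The edges of `T` lying in no subcube are exactly those in the directions of `R`, and `T`
has `2^n - 1` edges, so `Σ_{i ∈ R} a_i ≥ 2^|R| - 1`, with equality iff every `T(R,X)` is a tree.
-/

open Finset

namespace SimpleGraph

variable {V ι : Type*} {G : SimpleGraph V}

lemma IsAcyclic.exists_isTree_ge [Nonempty V] (hG : G.IsAcyclic) : ∃ F, G ≤ F ∧ F.IsTree := by
  obtain ⟨F, hGF, -, hF⟩ := connected_top.exists_isTree_le_of_le_of_isAcyclic le_top hG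
  exact ⟨F, hGF, hF⟩

variable [Fintype V] [DecidableRel G.Adj]

lemma IsAcyclic.card_edgeFinset_add_one_le [Nonempty V] (hG : G.IsAcyclic) :
    #G.edgeFinset + 1 ≤ Fintype.card V := by
  classical
  obtain ⟨F, hGF, hF⟩ := hG.exists_isTree_ge
  rw [← hF.card_edgeFinset]
  gcongr

lemma IsAcyclic.isTree_iff_card_edgeFinset [Nonempty V] (hG : G.IsAcyclic) :
    G.IsTree ↔ #G.edgeFinset + 1 = Fintype.card V := by
  classical
  refine ⟨fun h => h.card_edgeFinset, fun h => ?_⟩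
  obtain ⟨F, hGF, hF⟩ := hG.exists_isTree_ge
  suffices G = F from this ▸ hF
  rw [← edgeFinset_inj]
  refine eq_of_subset_of_card_le (edgeFinset_mono hGF) ?_
  rw [← Nat.add_one_le_add_one_iff, h, hF.card_edgeFinset]

variable [DecidableEq V] [DecidableEq ι] (f : V → ι)

lemma card_edgeFinset_induce_fiber (x : ι) :
    #(G.induce {v | f v = x}).edgeFinset = #{e ∈ G.edgeFinset | ∀ v ∈ e, f v = x} := by
  rw [← card_map, map_edgeFinset_induce]
  congr 1
  ext e
  simp [mem_sym2_iff]

lemma card_edgeFinset_eq_card_crossing_add_sum {t : Finset ι} (hf : ∀ v, f v ∈ t) :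
    #G.edgeFinset = #{e ∈ G.edgeFinset | ¬ (e.map f).IsDiag} +
      ∑ x ∈ t, #(G.induce {v | f v = x}).edgeFinset := by
  have hdisj : (t : Set ι).PairwiseDisjoint fun x => {e ∈ G.edgeFinset | ∀ v ∈ e, f v = x} := by
    intro x _ y _ hxy
    refine disjoint_filter.2 fun e _ hx hy => hxy ?_
    exact (hx _ e.out_fst_mem).symm.trans (hy _ e.out_fst_mem)
  have hdiag : {e ∈ G.edgeFinset | (e.map f).IsDiag} =
      t.biUnion fun x => {e ∈ G.edgeFinset | ∀ v ∈ e, f v = x} := by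
    ext e
    induction e with
    | _ u w =>
      simp only [mem_filter, mem_biUnion, Sym2.map_mk, Sym2.mk_isDiag_iff, Sym2.mem_iff]
      grind
  simp_rw [card_edgeFinset_induce_fiber, ← card_biUnion hdisj, ← hdiag]
  exact (card_filter_add_card_filter_not _).symm.trans (add_comm _ _)

theorem IsTree.card_crossing_add_one_eq_iff (hG : G.IsTree) {t : Finset ι}
    (hf : ∀ v, f v ∈ t) (ht : ∀ x ∈ t, ∃ v, f v = x) :
    #{e ∈ G.edgeFinset | ¬ (e.map f).IsDiag} + 1 = #t ↔
      ∀ x ∈ t, (G.induce {v | f v = x}).IsTree := by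
  have hne (x : ι) (hx : x ∈ t) : Nonempty {v | f v = x} := Set.nonempty_coe_sort.2 (ht x hx)
  have hacyc (x : ι) : (G.induce {v | f v = x}).IsAcyclic := hG.isAcyclic.induce _
  have hle (x : ι) (hx : x ∈ t) := have := hne x hx; (hacyc x).card_edgeFinset_add_one_le
  have htree (x : ι) (hx : x ∈ t) := have := hne x hx; (hacyc x).isTree_iff_card_edgeFinset
  have hsum := sum_eq_sum_iff_of_le hle
  have hE := card_edgeFinset_eq_card_crossing_add_sum (G := G) f hf
  have hV : ∑ x ∈ t, Fintype.card {v | f v = x} = Fintype.card V := by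
    simp only [Set.coe_ofPred, Fintype.card_subtype]
    exact (card_eq_sum_card_fiberwise fun v _ => hf v).symm
  rw [sum_add_distrib, sum_const, smul_eq_mul, mul_one, hV] at hsum
  have := hG.card_edgeFinset
  rw [forall₂_congr htree, ← hsum]
  omega

end SimpleGraph

section Cube

variable {n : ℕ}

lemma edgeInDir_mk_iff {i : Fin n} {X Y : Finset (Fin n)} :
    edgeInDir i s(X, Y) ↔ symmDiff X Y = {i} := by
  constructor
  · rintro ⟨Z, hZ⟩
    rcases Sym2.eq_iff.1 hZ with ⟨rfl, rfl⟩ | ⟨rfl, rfl⟩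
    · exact symmDiff_symmDiff_cancel_left _ _
    · rw [symmDiff_comm, symmDiff_symmDiff_cancel_left]
  · intro h
    exact ⟨X, by rw [← h, symmDiff_symmDiff_cancel_left]⟩

lemma cube_not_isDiag_map_inter_iff (R : Finset (Fin n)) {e : Sym2 (Finset (Fin n))}
    (he : e ∈ (cube n).edgeSet) : ¬(e.map (· ∩ R)).IsDiag ↔ ∃ i ∈ R, edgeInDir i e := by
  induction e with
  | _ X Y =>
    obtain ⟨d, hd⟩ := card_eq_one.1 (show #(symmDiff X Y) = 1 from he)
    have : X ∩ R = Y ∩ R ↔ d ∉ R := by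
      rw [← symmDiff_eq_bot, ← inf_eq_inter, ← inf_eq_inter, ← inf_symmDiff_distrib_right, hd,
        ← disjoint_iff, disjoint_singleton_left]
    simp only [Sym2.map_mk, Sym2.mk_isDiag_iff, this, not_not, edgeInDir_mk_iff, hd, singleton_inj,
      exists_eq_right']

open scoped Classical in
lemma sum_dirCount_eq_card (T : SimpleGraph (Finset (Fin n))) (R : Finset (Fin n)) :
    ∑ i ∈ R, dirCount T i = #{e ∈ T.edgeFinset | ∃ i ∈ R, edgeInDir i e} := by
  have hdir (i : Fin n) : dirCount T i = #{e ∈ T.edgeFinset | edgeInDir i e} := by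
    rw [dirCount, ← Set.ncard_coe_finset]
    simp only [coe_filter, mem_edgeFinset]
  rw [sum_congr rfl fun i _ => hdir i, ← card_biUnion]
  · congr 1
    ext e
    simp only [mem_biUnion, mem_filter]
    grind
  · intro i _ j _ hij
    exact disjoint_filter.2 fun e _ hi hj => hij (hi.unique hj)

end Cube

theorem stmt9_general (n : ℕ) (R : Finset (Fin n))
    (T : SimpleGraph (Finset (Fin n))) (hT : IsSpanningTreeOf T (cube n)) :
    ReducesOver (fun i => dirCount T i) R ↔
      ∀ X ⊆ R,
        IsSpanningTreeOf (T.induce {W : Finset (Fin n) | W ∩ R = X})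
          ((cube n).induce {W : Finset (Fin n) | W ∩ R = X}) := by
  classical
  obtain ⟨hle, htree⟩ := hT
  have hcross : {e ∈ T.edgeFinset | ¬(e.map (· ∩ R)).IsDiag} =
      {e ∈ T.edgeFinset | ∃ i ∈ R, edgeInDir i e} := filter_congr fun e he =>
    cube_not_isDiag_map_inter_iff R (edgeSet_mono hle (mem_edgeFinset.1 he))
  have key := htree.card_crossing_add_one_eq_iff (· ∩ R) (t := R.powerset)
    (fun W => mem_powerset.2 inter_subset_right)
    (fun X hX => ⟨X, inter_eq_left.2 (mem_powerset.1 hX)⟩)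
  rw [hcross, ← sum_dirCount_eq_card, card_powerset] at key
  have hpos := R.card.two_pow_pos
  have hsub (X : Finset (Fin n)) : T.induce {W | W ∩ R = X} ≤ (cube n).induce {W | W ∩ R = X} :=
    fun _ _ h => hle h
  simp only [ReducesOver, IsSpanningTreeOf, hsub, true_and, mem_powerset] at key ⊢
  rw [← key]
  omega

/-- Theorem: structural characterisation of reducible trees.
A spanning tree `T` of `Q_n` reduces over the proper nonempty subset `R` iff for every
`X ⊆ R` the restriction `T(R,X)` is a spanning tree of the subcube `Q_n(R,X)`. -/
theorem stmt9 (n : ℕ) (R : Finset (Fin n)) (hR1 : R.Nonempty) (hR2 : R ≠ Finset.univ)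
    (T : SimpleGraph (Finset (Fin n))) (hT : IsSpanningTreeOf T (cube n)) :
    ReducesOver (fun i => dirCount T i) R ↔
      ∀ X ⊆ R,
        IsSpanningTreeOf (T.induce {W : Finset (Fin n) | W ∩ R = X})
          ((cube n).induce {W : Finset (Fin n) | W ∩ R = X}) :=
  stmt9_general n R T hT
end
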